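/- Let 𝒞 be a small involutive category whose objects are indexed by the natural numbers, and let V be a Hilbert 𝒞-module. Then V admits an orthogonal decomposition into irreducible submodules: there is a family (W^i)_{i ∈ I} of submodules of V, each irreducible, such that for every object n the subspaces W^i_n are pairwise orthogonal in V_n and V_n is the (internal orthogonal direct) sum of the W^i_n. -/

import Mathlib

open scoped ComplexInnerProductSpace

/-! By Zorn's lemma there is a maximal family of pairwise orthogonal irreducible submodules.
Their sum `T` is a submodule, and so is its orthogonal complement since `V(c)† = V(c*)`.
If `Tₙ ≠ Vₙ`, let `U ⊆ Tₙᗮ` be minimal among the nonzero subspaces of `Vₙ` invariant under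
all `V(c)`, `c : n ⟶ n` (it exists in finite dimension). The submodule `G` generated by `U` is
irreducible: the submodule generated by a nonzero `η ∈ G` meets `Vₙ` nontrivially (otherwise `η`
would be orthogonal to `G`), hence contains `U` by minimality, hence all of `G`. Being orthogonal
to `T`, `G` contradicts maximality. -/

theorem Set.exists_maximal_pairwise {α : Type*} (P : α → Prop) (r : α → α → Prop) :
    ∃ S : Set α, Maximal (fun S : Set α => (∀ a ∈ S, P a) ∧ S.Pairwise r) S := by
  refine zorn_subset _ fun c hc hchain => ⟨⋃₀ c, ⟨?_, ?_⟩, fun s hs => Set.subset_sUnion_of_mem hs⟩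
  · rintro a ⟨s, hs, has⟩
    exact (hc hs).1 a has
  · exact (Set.pairwise_sUnion hchain.directedOn).2 fun s hs => (hc hs).2

namespace HilbertModule

variable {Hom : ℕ → ℕ → Type} {V : ℕ → Type}
  [∀ m, NormedAddCommGroup (V m)] [∀ m, InnerProductSpace ℂ (V m)]
  (F : ∀ {m n : ℕ}, Hom m n → (V m →ₗ[ℂ] V n))

def IsInvariant (W : ∀ n, Submodule ℂ (V n)) : Prop :=
  ∀ (m n : ℕ) (c : Hom m n), ∀ w ∈ W m, F c w ∈ W n

def IsIrreducible (W : ∀ n, Submodule ℂ (V n)) : Prop :=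
  ∀ m, ∀ ξ ∈ W m, ξ ≠ 0 → ∀ n, Submodule.span ℂ {v : V n | ∃ c : Hom m n, v = F c ξ} = W n

def orbitSpan {m : ℕ} (s : Set (V m)) (n : ℕ) : Submodule ℂ (V n) :=
  Submodule.span ℂ {v | ∃ c : Hom m n, ∃ u ∈ s, v = F c u}

structure IsHilbertModule (idm : ∀ m : ℕ, Hom m m)
    (comp : ∀ {l m n : ℕ}, Hom l m → Hom m n → Hom l n) (st : ∀ {m n : ℕ}, Hom m n → Hom n m) :
    Prop where
  map_id : ∀ m : ℕ, F (idm m) = LinearMap.id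
  map_comp : ∀ (l m n : ℕ) (c : Hom l m) (d : Hom m n), F (comp c d) = (F d).comp (F c)
  map_adjoint : ∀ (m n : ℕ) (c : Hom m n) (ξ : V m) (η : V n), ⟪F c ξ, η⟫ = ⟪ξ, F (st c) η⟫

variable {F}

theorem orbitSpan_singleton {m : ℕ} (ξ : V m) (n : ℕ) :
    orbitSpan @F {ξ} n = Submodule.span ℂ {v : V n | ∃ c : Hom m n, v = F c ξ} := by
  simp only [orbitSpan, Set.mem_singleton_iff, exists_eq_left]

theorem isInvariant_orbitSpan {comp : ∀ {l m n : ℕ}, Hom l m → Hom m n → Hom l n}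
    (hF_comp : ∀ (l m n : ℕ) (c : Hom l m) (d : Hom m n), F (comp c d) = (F d).comp (F c))
    {m : ℕ} (s : Set (V m)) : IsInvariant @F (orbitSpan @F s) := by
  intro k l c w hw
  have hmap : (orbitSpan @F s k).map (F c) ≤ orbitSpan @F s l := by
    rw [orbitSpan, Submodule.map_span, Submodule.span_le]
    rintro _ ⟨_, ⟨d, u, hu, rfl⟩, rfl⟩
    exact Submodule.subset_span ⟨comp d c, u, hu, by rw [hF_comp]; rfl⟩
  exact hmap (Submodule.mem_map_of_mem hw)

theorem orbitSpan_le {W : ∀ n, Submodule ℂ (V n)} (hW : IsInvariant @F W) {m : ℕ}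
    {s : Set (V m)} (hs : s ⊆ W m) (n : ℕ) : orbitSpan @F s n ≤ W n := by
  rw [orbitSpan, Submodule.span_le]
  rintro _ ⟨c, u, hu, rfl⟩
  exact hW _ _ c u (hs hu)

theorem orbitSpan_coe_self {idm : ∀ m : ℕ, Hom m m}
    (hF_id : ∀ m : ℕ, F (idm m) = LinearMap.id) {m : ℕ} {U : Submodule ℂ (V m)}
    (hU : ∀ c : Hom m m, ∀ u ∈ U, F c u ∈ U) : orbitSpan @F (U : Set (V m)) m = U := by
  rw [orbitSpan]
  refine le_antisymm (Submodule.span_le.2 ?_) fun u hu =>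
    Submodule.subset_span ⟨idm m, u, hu, by rw [hF_id]; rfl⟩
  rintro _ ⟨c, u, hu, rfl⟩
  exact hU c u hu

theorem isInvariant_iSup {ι : Type*} {W : ι → ∀ n, Submodule ℂ (V n)}
    (hW : ∀ i, IsInvariant @F (W i)) : IsInvariant @F fun n => ⨆ i, W i n := by
  intro m n c w hw
  have hmap : (⨆ i, W i m).map (F c) ≤ ⨆ i, W i n := by
    rw [Submodule.map_iSup]
    exact iSup_mono fun i => Submodule.map_le_iff_le_comap.mpr fun x hx => hW i m n c x hx
  exact hmap (Submodule.mem_map_of_mem hw)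

theorem IsInvariant.orthogonal {st : ∀ {m n : ℕ}, Hom m n → Hom n m}
    (hF_adj : ∀ (m n : ℕ) (c : Hom m n) (ξ : V m) (η : V n), ⟪F c ξ, η⟫ = ⟪ξ, F (st c) η⟫)
    {W : ∀ n, Submodule ℂ (V n)} (hW : IsInvariant @F W) :
    IsInvariant @F fun n => (W n)ᗮ := by
  intro m n c y hy
  rw [Submodule.mem_orthogonal']
  intro u hu
  rw [hF_adj]
  exact (Submodule.mem_orthogonal' _ _).1 hy _ (hW _ _ (st c) u hu)

namespace IsHilbertModule

variable {idm : ∀ m : ℕ, Hom m m} {comp : ∀ {l m n : ℕ}, Hom l m → Hom m n → Hom l n}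
  {st : ∀ {m n : ℕ}, Hom m n → Hom n m}

theorem isIrreducible_orbitSpan (hV : IsHilbertModule @F idm comp st) {n₀ : ℕ}
    {U : Submodule ℂ (V n₀)}
    (hU : Minimal (fun U : Submodule ℂ (V n₀) => U ≠ ⊥ ∧ ∀ c : Hom n₀ n₀, ∀ u ∈ U, F c u ∈ U) U) :
    IsIrreducible @F (orbitSpan @F (U : Set (V n₀))) := by
  have hG : IsInvariant @F (orbitSpan @F (U : Set (V n₀))) := isInvariant_orbitSpan hV.map_comp _
  have hGU : orbitSpan @F (U : Set (V n₀)) n₀ = U := orbitSpan_coe_self hV.map_id hU.prop.2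
  intro m η hηG hη0 n
  have hX : IsInvariant @F (orbitSpan @F {η}) := isInvariant_orbitSpan hV.map_comp _
  have hXG : ∀ k, orbitSpan @F {η} k ≤ orbitSpan @F (U : Set (V n₀)) k :=
    orbitSpan_le hG (Set.singleton_subset_iff.2 hηG)
  have hXne : orbitSpan @F {η} n₀ ≠ ⊥ := by
    intro hX0
    -- `⟪F c u, η⟫ = ⟪u, F (st c) η⟫ = 0`, so `η` is orthogonal to `orbitSpan U m` ∋ `η`.
    have hGη : orbitSpan @F (U : Set (V n₀)) m ≤ (ℂ ∙ η)ᗮ := by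
      rw [orbitSpan, Submodule.span_le]
      rintro _ ⟨c, u, -, rfl⟩
      have hc : F (st c) η ∈ orbitSpan @F {η} n₀ := Submodule.subset_span ⟨st c, η, rfl, rfl⟩
      rw [hX0, Submodule.mem_bot] at hc
      rw [SetLike.mem_coe, Submodule.mem_orthogonal_singleton_iff_inner_left, hV.map_adjoint, hc,
        inner_zero_right]
    exact hη0 (inner_self_eq_zero.1
      (Submodule.mem_orthogonal_singleton_iff_inner_left.1 (hGη hηG)))
  have hXU : orbitSpan @F {η} n₀ ≤ U := hGU ▸ hXG n₀
  have hUX : U ≤ orbitSpan @F {η} n₀ := hU.le_of_le ⟨hXne, hX n₀ n₀⟩ hXU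
  rw [← orbitSpan_singleton]
  exact le_antisymm (hXG n) (orbitSpan_le hX hUX n)

variable [∀ m, FiniteDimensional ℂ (V m)]

theorem exists_isIrreducible_le_orthogonal (hV : IsHilbertModule @F idm comp st)
    {T : ∀ n, Submodule ℂ (V n)} (hT : IsInvariant @F T) {n₀ : ℕ} (hn₀ : T n₀ ≠ ⊤) :
    ∃ G : ∀ n, Submodule ℂ (V n), IsInvariant @F G ∧ IsIrreducible @F G ∧
      (∀ n, G n ≤ (T n)ᗮ) ∧ G n₀ ≠ ⊥ := by
  have hY := hT.orthogonal hV.map_adjoint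
  obtain ⟨U, hUY, hU⟩ := exists_minimal_le_of_wellFoundedLT
    (fun U : Submodule ℂ (V n₀) => U ≠ ⊥ ∧ ∀ c : Hom n₀ n₀, ∀ u ∈ U, F c u ∈ U) (T n₀)ᗮ
    ⟨mt Submodule.orthogonal_eq_bot_iff.1 hn₀, fun c => hY _ _ c⟩
  refine ⟨orbitSpan @F (U : Set (V n₀)), isInvariant_orbitSpan hV.map_comp _,
    hV.isIrreducible_orbitSpan hU, orbitSpan_le hY hUY, ?_⟩
  rw [orbitSpan_coe_self hV.map_id hU.prop.2]
  exact hU.prop.1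

theorem iSup_eq_top_of_maximal (hV : IsHilbertModule @F idm comp st)
    {S : Set (∀ n, Submodule ℂ (V n))}
    (hS : Maximal (fun S : Set (∀ n, Submodule ℂ (V n)) =>
      (∀ W ∈ S, IsInvariant @F W ∧ IsIrreducible @F W) ∧ S.Pairwise fun W X => ∀ n, W n ⟂ X n) S)
    (n : ℕ) : ⨆ W : S, W.1 n = ⊤ := by
  have hT : IsInvariant @F fun n => ⨆ W : S, W.1 n :=
    isInvariant_iSup fun W => (hS.prop.1 W.1 W.2).1
  have hle {W} (hW : W ∈ S) (n : ℕ) : W n ≤ ⨆ W : S, W.1 n := le_iSup (fun W : S => W.1 n) ⟨W, hW⟩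
  by_contra hn
  obtain ⟨G, hGinv, hGirr, hGT, hG0⟩ := hV.exists_isIrreducible_le_orthogonal hT hn
  have hGS : G ∈ S := by
    refine hS.mem_of_prop_insert ⟨?_, hS.prop.2.insert fun W hW _ => ?_⟩
    · rintro W (rfl | hW)
      exacts [⟨hGinv, hGirr⟩, hS.prop.1 W hW]
    · have h (n : ℕ) : G n ⟂ W n := (Submodule.isOrtho_orthogonal_left _).mono (hGT n) (hle hW n)
      exact ⟨h, fun n => (h n).symm⟩
  exact hG0 (Submodule.isOrtho_self.1
    ((Submodule.isOrtho_orthogonal_left _).mono (hGT n) (hle hGS n)))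

end IsHilbertModule

end HilbertModule

open HilbertModule in
theorem hilbertModule_decomposition_into_irreducibles_general
    (Hom : ℕ → ℕ → Type)
    (idm : ∀ m : ℕ, Hom m m)
    (comp : ∀ {l m n : ℕ}, Hom l m → Hom m n → Hom l n)
    (st : ∀ {m n : ℕ}, Hom m n → Hom n m)
    (V : ℕ → Type)
    [∀ m, NormedAddCommGroup (V m)] [∀ m, InnerProductSpace ℂ (V m)]
    [∀ m, FiniteDimensional ℂ (V m)]
    (F : ∀ {m n : ℕ}, Hom m n → (V m →ₗ[ℂ] V n))
    (hF_id : ∀ m : ℕ, F (idm m) = LinearMap.id)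
    (hF_comp : ∀ {l m n : ℕ} (c : Hom l m) (d : Hom m n),
      F (comp c d) = (F d).comp (F c))
    (hF_adj : ∀ {m n : ℕ} (c : Hom m n) (ξ : V m) (η : V n),
      ⟪F c ξ, η⟫ = ⟪ξ, F (st c) η⟫) :
    ∃ (I : Type) (W : I → ∀ n : ℕ, Submodule ℂ (V n)),
      -- each `W i` is a submodule of `V`
      (∀ (i : I) {m n : ℕ} (c : Hom m n), ∀ w ∈ W i m, F c w ∈ W i n) ∧
      -- each `W i` is irreducible
      (∀ (i : I) (m : ℕ), ∀ ξ ∈ W i m, ξ ≠ 0 → ∀ n : ℕ,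
        Submodule.span ℂ {v : V n | ∃ c : Hom m n, v = F c ξ} = W i n) ∧
      -- the `W i` are pairwise orthogonal
      (∀ i j : I, i ≠ j → ∀ n : ℕ, ∀ w ∈ W i n, ∀ x ∈ W j n, ⟪w, x⟫ = 0) ∧
      -- and they sum to all of `V`
      (∀ n : ℕ, (⨆ i : I, W i n) = ⊤) := by
  have hV : IsHilbertModule @F idm comp st := ⟨hF_id, fun _ _ _ => hF_comp, fun _ _ => hF_adj⟩
  obtain ⟨S, hS⟩ := Set.exists_maximal_pairwise
    (fun W => IsInvariant @F W ∧ IsIrreducible @F W) (fun W X => ∀ n, W n ⟂ X n)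
  refine ⟨S, fun W => W.1, fun W _ _ => (hS.prop.1 W W.2).1 _ _, fun W => (hS.prop.1 W W.2).2,
    fun W X hWX n => ?_, hV.iSup_eq_top_of_maximal hS⟩
  exact Submodule.isOrtho_iff_inner_eq.1 (hS.prop.2 W.2 X.2 (Subtype.coe_ne_coe.2 hWX) n)

/-- Let `𝒞` be a small involutive category whose objects are indexed by `ℕ`, and let
`V` be a Hilbert `𝒞`-module.  Then `V` admits an orthogonal decomposition into
irreducible submodules: there is a family `(Wⁱ)_{i ∈ I}` of submodules of `V`, each
irreducible, such that for every `n` the subspaces `Wⁱ n` are pairwise orthogonal in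
`V n` and their (internal orthogonal direct) sum is all of `V n`. -/
theorem hilbertModule_decomposition_into_irreducibles
    (Hom : ℕ → ℕ → Type)
    (idm : ∀ m : ℕ, Hom m m)
    (comp : ∀ {l m n : ℕ}, Hom l m → Hom m n → Hom l n)
    (st : ∀ {m n : ℕ}, Hom m n → Hom n m)
    (hst_st : ∀ {m n : ℕ} (c : Hom m n), st (st c) = c)
    (hst_comp : ∀ {l m n : ℕ} (c : Hom l m) (d : Hom m n),
      st (comp c d) = comp (st d) (st c))
    (hst_id : ∀ m : ℕ, st (idm m) = idm m)
    (V : ℕ → Type)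
    [∀ m, NormedAddCommGroup (V m)] [∀ m, InnerProductSpace ℂ (V m)]
    [∀ m, FiniteDimensional ℂ (V m)]
    (F : ∀ {m n : ℕ}, Hom m n → (V m →ₗ[ℂ] V n))
    (hF_id : ∀ m : ℕ, F (idm m) = LinearMap.id)
    (hF_comp : ∀ {l m n : ℕ} (c : Hom l m) (d : Hom m n),
      F (comp c d) = (F d).comp (F c))
    (hF_adj : ∀ {m n : ℕ} (c : Hom m n) (ξ : V m) (η : V n),
      ⟪F c ξ, η⟫ = ⟪ξ, F (st c) η⟫) :
    ∃ (I : Type) (W : I → ∀ n : ℕ, Submodule ℂ (V n)),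
      -- each `W i` is a submodule of `V`
      (∀ (i : I) {m n : ℕ} (c : Hom m n), ∀ w ∈ W i m, F c w ∈ W i n) ∧
      -- each `W i` is irreducible
      (∀ (i : I) (m : ℕ), ∀ ξ ∈ W i m, ξ ≠ 0 → ∀ n : ℕ,
        Submodule.span ℂ {v : V n | ∃ c : Hom m n, v = F c ξ} = W i n) ∧
      -- the `W i` are pairwise orthogonal
      (∀ i j : I, i ≠ j → ∀ n : ℕ, ∀ w ∈ W i n, ∀ x ∈ W j n, ⟪w, x⟫ = 0) ∧
      -- and they sum to all of `V`
      (∀ n : ℕ, (⨆ i : I, W i n) = ⊤) :=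
  hilbertModule_decomposition_into_irreducibles_general Hom idm comp st V F hF_id hF_comp hF_adj
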